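/- Let 0 < αμ ≤ 1 and β ≥ 0 with β ≤ (1 - √(αμ))/(1 + √(αμ)). Then (1/2)(1+β)(1-αμ) + (1/2)√((1+β)²(1-αμ)² - 4β(1-αμ)) ≥ 1 - √(αμ), where the discriminant (1+β)²(1-αμ)² - 4β(1-αμ) is nonnegative. -/
import Mathlib


theorem stmt_1 (α μ β : ℝ) (hα : 0 < α) (hμ : 0 < μ) (hαμ : α * μ ≤ 1)
    (hβ0 : 0 ≤ β) (hβ : β ≤ (1 - Real.sqrt (α * μ)) / (1 + Real.sqrt (α * μ))) :
    0 ≤ (1 + β) ^ 2 * (1 - α * μ) ^ 2 - 4 * β * (1 - α * μ) ∧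
    (1 / 2) * (1 + β) * (1 - α * μ) +
      (1 / 2) * Real.sqrt ((1 + β) ^ 2 * (1 - α * μ) ^ 2 - 4 * β * (1 - α * μ)) ≥
      1 - Real.sqrt (α * μ) := by
  set s := Real.sqrt (α * μ) with hs
  have hs0 : 0 ≤ s := Real.sqrt_nonneg _
  have hs2 : s ^ 2 = α * μ := Real.sq_sqrt (by positivity)
  have hs1 : s ≤ 1 := by
    rw [hs]; exact Real.sqrt_le_one.mpr hαμ
  rw [← hs2]
  have hβ' : β * (1 + s) ≤ 1 - s := by
    have h1 : (0:ℝ) < 1 + s := by linarith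
    calc β * (1 + s) ≤ ((1 - s) / (1 + s)) * (1 + s) :=
          mul_le_mul_of_nonneg_right hβ (le_of_lt h1)
      _ = 1 - s := by field_simp
  have key : (1 + β) ^ 2 * (1 - s ^ 2) ^ 2 - 4 * β * (1 - s ^ 2)
      = (1 - s ^ 2) * (((1 - s) - β * (1 + s)) * ((1 + s) - β * (1 - s))) := by ring
  have hD : 0 ≤ (1 + β) ^ 2 * (1 - s ^ 2) ^ 2 - 4 * β * (1 - s ^ 2) := by
    rw [key]
    have h1 : 0 ≤ 1 - s ^ 2 := by nlinarith
    have h2 : 0 ≤ (1 - s) - β * (1 + s) := by linarith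
    have h3 : 0 ≤ (1 + s) - β * (1 - s) := by nlinarith
    positivity
  refine ⟨hD, ?_⟩
  set r := Real.sqrt ((1 + β) ^ 2 * (1 - s ^ 2) ^ 2 - 4 * β * (1 - s ^ 2)) with hr
  have hr0 : 0 ≤ r := Real.sqrt_nonneg _
  have hr2 : r ^ 2 = (1 + β) ^ 2 * (1 - s ^ 2) ^ 2 - 4 * β * (1 - s ^ 2) := Real.sq_sqrt hD
  rcases le_or_gt (2 * (1 - s) - (1 + β) * (1 - s ^ 2)) 0 with h | h
  · linarith
  · nlinarith [mul_nonneg (mul_nonneg hs0 (by linarith : (0:ℝ) ≤ 1 - s))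
      (by linarith : (0:ℝ) ≤ (1 - s) - β * (1 + s)), sq_nonneg (r - (2 * (1 - s) - (1 + β) * (1 - s ^ 2)))]
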